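/- arXiv:math/0403514 — 2 statements merged into one kernel-verified Lean document; each statement's English description precedes it below -/
import Mathlib

section
/- If H is a normal subgroup of a finite group G, H has an ordered generating system a₁,…,a_k, and G/H has an ordered generating system b₁H,…,b_lH, then the elements b₁,…,b_l,a₁,…,a_k form an ordered generating system of G. -/
/-!
The exponents of the `b j` pick out a coset of `H` together with a representative `s` of it,
and the exponents of the `a j` then pick out the element `s⁻¹ * g` of `H`; both choices are
unique. In other words, a transversal of `H` times `H` is in bijection with `G`.
-/

def IsOGS {G : Type*} [Group G] {n : ℕ} (a : Fin n → G) (m : Fin n → ℕ) : Prop :=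
  (∀ k, 0 < m k) ∧
    ∀ g : G, ∃! i : (k : Fin n) → Fin (m k),
      g = (List.ofFn fun k => a k ^ ((i k : ℕ))).prod

def HasOGS (G : Type*) [Group G] : Prop :=
  ∃ (n : ℕ) (a : Fin n → G) (m : Fin n → ℕ), IsOGS a m

open Function

def Fin.addCasesEquiv {m n : ℕ} (γ : Fin (m + n) → Type*) :
    ((i : Fin m) → γ (Fin.castAdd n i)) × ((j : Fin n) → γ (Fin.natAdd m j)) ≃ ∀ i, γ i where
  toFun p := Fin.addCases p.1 p.2
  invFun v := (fun i => v (Fin.castAdd n i), fun j => v (Fin.natAdd m j))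
  left_inv p := by simp
  right_inv v := funext (Fin.addCases_castAdd_natAdd v)

def Fin.appendBoundedEquiv {l k : ℕ} (mb : Fin l → ℕ) (ma : Fin k → ℕ) :
    ((j : Fin l) → Fin (mb j)) × ((j : Fin k) → Fin (ma j)) ≃
      ((t : Fin (l + k)) → Fin (Fin.append mb ma t)) :=
  (Equiv.prodCongr (Equiv.piCongrRight fun j => finCongr (Fin.append_left mb ma j).symm)
    (Equiv.piCongrRight fun j => finCongr (Fin.append_right mb ma j).symm)).trans
    (Fin.addCasesEquiv fun t => Fin (Fin.append mb ma t))

section OGSProduct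

variable {M N : Type*} [Monoid M] [Monoid N]

def ogsProd {n : ℕ} {m : Fin n → ℕ} (a : Fin n → M) (i : (k : Fin n) → Fin (m k)) : M :=
  (List.ofFn fun k => a k ^ (i k : ℕ)).prod

theorem map_ogsProd {F : Type*} [FunLike F M N] [MonoidHomClass F M N] (f : F) {n : ℕ}
    {m : Fin n → ℕ} (a : Fin n → M) (i : (k : Fin n) → Fin (m k)) :
    f (ogsProd a i) = ogsProd (fun k => f (a k)) i := by
  simp [ogsProd, map_list_prod, List.map_ofFn, Function.comp_def]

theorem ogsProd_append {l k : ℕ} {mb : Fin l → ℕ} {ma : Fin k → ℕ} (b : Fin l → M)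
    (a : Fin k → M) (p : ((j : Fin l) → Fin (mb j)) × ((j : Fin k) → Fin (ma j))) :
    ogsProd (Fin.append b a) (Fin.appendBoundedEquiv mb ma p) = ogsProd b p.1 * ogsProd a p.2 := by
  have hfactor : (fun t => Fin.append b a t ^ (Fin.appendBoundedEquiv mb ma p t : ℕ)) =
      Fin.append (fun j => b j ^ (p.1 j : ℕ)) (fun j => a j ^ (p.2 j : ℕ)) := by
    ext t
    cases t using Fin.addCases <;> simp [Fin.appendBoundedEquiv, Fin.addCasesEquiv]
  rw [ogsProd, hfactor, List.ofFn_fin_append, List.prod_append]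
  rfl

end OGSProduct

theorem isOGS_iff_bijective {G : Type*} [Group G] {n : ℕ} (a : Fin n → G) (m : Fin n → ℕ) :
    IsOGS a m ↔ (∀ k, 0 < m k) ∧ Bijective (ogsProd (m := m) a) := by
  simp only [IsOGS, bijective_iff_existsUnique, ogsProd, eq_comm]

theorem QuotientGroup.bijective_mul_of_bijective_mk {G X Y : Type*} [Group G] {H : Subgroup G}
    (s : X → G) (t : Y → H) (hs : Bijective fun x => (s x : G ⧸ H)) (ht : Bijective t) :
    Bijective fun p : X × Y => s p.1 * t p.2 := by
  have hmk (x : X) (y : Y) : ((s x * t y : G) : G ⧸ H) = s x :=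
    QuotientGroup.mk_mul_of_mem _ (t y).2
  refine ⟨fun ⟨x, y⟩ ⟨x', y'⟩ h => ?_, fun g => ?_⟩
  · have hx : x = x' := hs.1 (by simpa only [hmk] using congrArg (fun g : G => (g : G ⧸ H)) h)
    subst hx
    exact Prod.ext rfl (ht.1 (Subtype.ext (mul_left_cancel h)))
  · obtain ⟨x, hx⟩ := hs.2 g
    obtain ⟨y, hy⟩ := ht.2 ⟨(s x)⁻¹ * g, QuotientGroup.eq.1 hx⟩
    exact ⟨(x, y), by simp [hy]⟩

theorem ogs_of_normal_and_quotient_general {G : Type*} [Group G]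
    (H : Subgroup G) [H.Normal]
    {k l : ℕ} (a : Fin k → H) (ma : Fin k → ℕ) (ha : IsOGS a ma)
    (b : Fin l → G) (mb : Fin l → ℕ)
    (hb : IsOGS (fun j => ((b j : G) : G ⧸ H)) mb) :
    IsOGS (Fin.append b fun j => (a j : G)) (Fin.append mb ma) := by
  rw [isOGS_iff_bijective] at ha hb ⊢
  refine ⟨(Fin.forall_fin_add _).2 ⟨by simpa using hb.1, by simpa using ha.1⟩, ?_⟩
  have hprod : ogsProd (Fin.append b fun j => (a j : G)) ∘ Fin.appendBoundedEquiv mb ma =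
      fun p => ogsProd b p.1 * ((ogsProd a p.2 : H) : G) := by
    funext p
    rw [comp_apply, ogsProd_append]
    exact congrArg _ (map_ogsProd H.subtype a p.2).symm
  have hb_mk : Bijective fun x => ((ogsProd (m := mb) b x : G) : G ⧸ H) := by
    convert hb.2 using 1
    funext x
    exact map_ogsProd (QuotientGroup.mk' H) b x
  rw [← (Fin.appendBoundedEquiv mb ma).bijective_comp, hprod]
  exact QuotientGroup.bijective_mul_of_bijective_mk _ _ hb_mk ha.2

theorem ogs_of_normal_and_quotient {G : Type*} [Group G] [Fintype G]
    (H : Subgroup G) [H.Normal]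
    {k l : ℕ} (a : Fin k → H) (ma : Fin k → ℕ) (ha : IsOGS a ma)
    (b : Fin l → G) (mb : Fin l → ℕ)
    (hb : IsOGS (fun j => ((b j : G) : G ⧸ H)) mb) :
    IsOGS (Fin.append b fun j => (a j : G)) (Fin.append mb ma) :=
  ogs_of_normal_and_quotient_general H a ma ha b mb hb
end

section
/- Let G be a finite group with a subgroup H such that H has an ordered generating system, gcd([G:H], |H|) = 1, and G contains an element a of order [G:H]. Then G has an ordered generating system, with first element a followed by the ordered generating system of H. -/
theorem isOGS_cons_of_orderOf_index {G : Type*} [Group G] [Fintype G]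
    (H : Subgroup G) (hcop : Nat.Coprime H.index (Nat.card H))
    {n : ℕ} (b : Fin n → H) (m : Fin n → ℕ) (hb : IsOGS b m)
    (a : G) (ha : orderOf a = H.index) :
    IsOGS (Fin.cons a fun j => (b j : G)) (Fin.cons H.index m) := by
  obtain ⟨hm, hrep⟩ := hb
  have hN : 0 < H.index := Nat.pos_of_ne_zero H.index_ne_zero_of_finite
  -- key: powers of a with exponent < index represent distinct cosets
  have key : ∀ i j : Fin H.index, ((a ^ (i : ℕ))⁻¹ * a ^ (j : ℕ)) ∈ H → i = j := by
    intro i j hx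
    set x := (a ^ (i : ℕ))⁻¹ * a ^ (j : ℕ) with hxdef
    have hx1 : x ∈ Subgroup.zpowers a :=
      mul_mem (inv_mem (pow_mem (Subgroup.mem_zpowers a) _))
        (pow_mem (Subgroup.mem_zpowers a) _)
    have hd1 : orderOf x ∣ H.index := by
      have := orderOf_dvd_natCard (⟨x, hx1⟩ : Subgroup.zpowers a)
      rwa [Subgroup.orderOf_mk, Nat.card_zpowers, ha] at this
    have hd2 : orderOf x ∣ Nat.card H := by
      have := orderOf_dvd_natCard (⟨x, hx⟩ : H)
      rwa [Subgroup.orderOf_mk] at this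
    have hone : orderOf x = 1 :=
      Nat.eq_one_of_dvd_one (hcop ▸ Nat.dvd_gcd hd1 hd2)
    have hx1' : x = 1 := orderOf_eq_one_iff.mp hone
    have : a ^ (i : ℕ) = a ^ (j : ℕ) := by
      rw [hxdef, inv_mul_eq_one] at hx1'; exact hx1'
    have := pow_inj_mod.mp this
    rw [ha, Nat.mod_eq_of_lt i.isLt, Nat.mod_eq_of_lt j.isLt] at this
    exact Fin.ext this
  -- the map to cosets is bijective
  have hbij : Function.Bijective
      (fun i : Fin H.index => ((a ^ (i : ℕ) : G) : G ⧸ H)) := by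
    rw [Nat.bijective_iff_injective_and_card]
    refine ⟨fun i j hij => key i j (QuotientGroup.eq.mp hij), ?_⟩
    simp [Subgroup.index]
  constructor
  · exact fun k => Fin.cases hN hm k
  · intro g
    obtain ⟨i0, hi0⟩ := hbij.2 ((g : G ⧸ H))
    have hmem : (a ^ (i0 : ℕ))⁻¹ * g ∈ H := QuotientGroup.eq.mp hi0
    obtain ⟨j, hj, hjuniq⟩ := hrep ⟨(a ^ (i0 : ℕ))⁻¹ * g, hmem⟩
    have coeprod : ∀ i : (k : Fin n) → Fin (m k),
        ((((List.ofFn fun k => b k ^ ((i k : ℕ))).prod : H) : G)) =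
          (List.ofFn fun k => (b k : G) ^ ((i k : ℕ))).prod := by
      intro i
      rw [SubmonoidClass.coe_list_prod, List.map_ofFn]
      rfl
    have prodform : ∀ i : (k : Fin (n+1)) → Fin ((Fin.cons H.index m : Fin (n+1) → ℕ) k),
        (List.ofFn fun k => (Fin.cons a fun j => (b j : G)) k ^ ((i k : ℕ))).prod =
          a ^ ((i 0 : ℕ)) *
            (List.ofFn fun k => (b k : G) ^ ((Fin.tail i k : ℕ))).prod := by
      intro i
      rw [List.ofFn_succ, List.prod_cons]
      rfl
    refine ⟨Fin.cons i0 j, ?_, ?_⟩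
    · beta_reduce
      rw [prodform]
      have h0 : ((Fin.cons i0 j : (k : Fin (n+1)) → Fin ((Fin.cons H.index m : Fin (n+1) → ℕ) k)) 0) = i0 := rfl
      have ht : Fin.tail (Fin.cons i0 j : (k : Fin (n+1)) → Fin ((Fin.cons H.index m : Fin (n+1) → ℕ) k)) = j :=
        Fin.tail_cons _ _
      rw [h0, ht, ← coeprod, ← hj]
      simp
    · intro i' hi'
      rw [prodform i', ← coeprod (Fin.tail i')] at hi'
      set P : H := (List.ofFn fun k => b k ^ ((Fin.tail i' k : ℕ))).prod with hP
      have hmem' : (a ^ ((i' 0 : ℕ)))⁻¹ * g ∈ H := by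
        rw [hi']
        simp
      have hc : ((a ^ ((i' 0 : ℕ)) : G) : G ⧸ H) = (g : G ⧸ H) :=
        QuotientGroup.eq.mpr hmem'
      have hi0eq : i' 0 = i0 := hbij.1 (hc.trans hi0.symm)
      have hPh : P = ⟨(a ^ (i0 : ℕ))⁻¹ * g, hmem⟩ := by
        apply Subtype.ext
        have hgoal : (a ^ (i0 : ℕ))⁻¹ * g = (P : G) := by
          rw [hi', hi0eq]; group
        exact hgoal.symm
      have htail : Fin.tail i' = j := hjuniq _ (by rw [← hPh, hP])
      rw [← Fin.cons_self_tail i', hi0eq, htail]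
end
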